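/- For any commutative ring R, any n : ℕ, and any derivation D of A = MvPolynomial (Fin n) R: if the Jacobian matrix J(D) is nilpotent, then D is a right nilpotent element of the left-symmetric algebra of derivations, i.e., there exists m with D^{[m]} = 0, where D^{[1]} = D and D^{[r+1]} = D^{[r]} ⋆ D. -/

import Mathlib

/-!
A derivation of `R[X₁, …, Xₙ]` is `∑ⱼ D(Xⱼ) ∂ⱼ`, so `(E ⋆ D)(Xᵢ) = ∑ⱼ ∂ⱼ(D Xᵢ) E(Xⱼ)`: on the
vector of values at the variables, `· ⋆ D` acts as multiplication by `J(D)`. Hence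
`D^{[r+1]}(X) = J(D)^r D(X)`, which vanishes once `J(D)^r = 0`.
-/

/-- The left-symmetric product on derivations of `MvPolynomial (Fin n) R`:
`D ⋆ E` is the unique derivation with `(D ⋆ E) (X i) = D (E (X i))`. -/
noncomputable def lsmul {R : Type*} [CommRing R] {n : ℕ}
    (D E : Derivation R (MvPolynomial (Fin n) R) (MvPolynomial (Fin n) R)) :
    Derivation R (MvPolynomial (Fin n) R) (MvPolynomial (Fin n) R) :=
  MvPolynomial.mkDerivation R (fun i => D (E (MvPolynomial.X i)))

/-- The Jacobian matrix of a derivation: `jac D j i = ∂ᵢ (D (X j))`. -/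
noncomputable def jac {R : Type*} [CommRing R] {n : ℕ}
    (D : Derivation R (MvPolynomial (Fin n) R) (MvPolynomial (Fin n) R)) :
    Matrix (Fin n) (Fin n) (MvPolynomial (Fin n) R) :=
  Matrix.of fun j i => MvPolynomial.pderiv i (D (MvPolynomial.X j))

/-- Right powers: `rightPow D 1 = D`, `rightPow D (r+1) = rightPow D r ⋆ D`. -/
noncomputable def rightPow {R : Type*} [CommRing R] {n : ℕ}
    (D : Derivation R (MvPolynomial (Fin n) R) (MvPolynomial (Fin n) R)) :
    ℕ → Derivation R (MvPolynomial (Fin n) R) (MvPolynomial (Fin n) R)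
  | 0 => 0
  | 1 => D
  | (r + 2) => lsmul (rightPow D (r + 1)) D

namespace MvPolynomial

theorem derivation_eq_sum_pderiv_smul {R σ A : Type*} [CommSemiring R] [Fintype σ]
    [AddCommMonoid A] [Module R A] [Module (MvPolynomial σ R) A]
    [IsScalarTower R (MvPolynomial σ R) A]
    (D : Derivation R (MvPolynomial σ R) A) (p : MvPolynomial σ R) :
    D p = ∑ i, pderiv i p • D (X i) := by
  classical
  induction p using MvPolynomial.induction_on with
  | C a => simp
  | add p q hp hq => simp only [map_add, hp, hq, add_smul, Finset.sum_add_distrib]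
  | mul_X p i hp =>
    rw [Derivation.leibniz, hp, Finset.smul_sum]
    simp only [pderiv_mul, pderiv_X, add_smul, Finset.sum_add_distrib, smul_smul, Pi.single_apply,
      mul_ite, mul_one, mul_zero, ite_smul, zero_smul, Finset.sum_ite_eq, Finset.mem_univ, if_true,
      mul_comm (X i), add_comm]

end MvPolynomial

open MvPolynomial Matrix

section

variable {R : Type*} [CommRing R] {n : ℕ}

theorem lsmul_apply_X (E D : Derivation R (MvPolynomial (Fin n) R) (MvPolynomial (Fin n) R))
    (i : Fin n) : lsmul E D (X i) = (jac D *ᵥ fun j => E (X j)) i := by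
  rw [lsmul, mkDerivation_X, derivation_eq_sum_pderiv_smul]
  rfl

theorem rightPow_succ_apply_X (D : Derivation R (MvPolynomial (Fin n) R) (MvPolynomial (Fin n) R))
    (r : ℕ) (i : Fin n) : rightPow D (r + 1) (X i) = (jac D ^ r *ᵥ fun j => D (X j)) i := by
  induction r generalizing i with
  | zero => simp [rightPow]
  | succ r ih =>
    rw [rightPow, lsmul_apply_X, funext ih, mulVec_mulVec, ← pow_succ']

end

/-- If the Jacobian matrix of `D` is nilpotent, then `D` is a right nilpotent element of
the left-symmetric algebra of derivations. -/
theorem right_nilpotent_of_jac_nilpotent (R : Type*) [CommRing R] (n : ℕ)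
    (D : Derivation R (MvPolynomial (Fin n) R) (MvPolynomial (Fin n) R))
    (h : IsNilpotent (jac D)) :
    ∃ m : ℕ, 2 ≤ m ∧ rightPow D m = 0 := by
  obtain ⟨k, hk⟩ := h
  refine ⟨k + 2, by omega, derivation_ext fun i => ?_⟩
  rw [rightPow_succ_apply_X, pow_succ, hk, zero_mul, zero_mulVec]
  rfl
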